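/- arXiv:2304.07252 — 3 statements merged into one kernel-verified Lean document; each statement's English description precedes it below -/
import Mathlib

section
/- For a,b in L^∞(T), the operator norm of the paired operator S_{a,b} satisfies max(‖a‖_∞, ‖b‖_∞) ≤ ‖S_{a,b}‖ ≤ √2 · max(‖a‖_∞, ‖b‖_∞). -/
open MeasureTheory Complex Real AddCircle
open scoped ENNReal ComplexConjugate

noncomputable section

instance : Fact (0 < 2 * π) := ⟨by positivity⟩

/-- Normalized Haar (Lebesgue) measure on the unit circle, realized as `AddCircle (2π)`. -/
abbrev μT : Measure (AddCircle (2 * π)) := AddCircle.haarAddCircle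

/-- The Lebesgue space `L²(𝕋)`. -/
abbrev L2 : Type := Lp ℂ 2 μT

/-- The space `L^∞(𝕋)`. -/
abbrev Linf : Type := Lp ℂ ∞ μT

/-- Multiplication of an `L²` function by an `L^∞` function, as an element of `L²`. -/
def mul2 (a : Linf) (f : L2) : L2 :=
  ((Lp.memLp f).smul (p := ∞) (Lp.memLp a)).toLp ((a : AddCircle (2 * π) → ℂ) • (f : AddCircle (2 * π) → ℂ))

lemma mul2_coe (a : Linf) (f : L2) :
    (mul2 a f : AddCircle (2 * π) → ℂ) =ᵐ[μT] fun x => a x * f x :=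
  (MemLp.coeFn_toLp _)

/-- Multiplication in `L^∞`. -/
def mulInf (a b : Linf) : Linf :=
  ((Lp.memLp b).smul (p := ∞) (Lp.memLp a)).toLp ((a : AddCircle (2 * π) → ℂ) • (b : AddCircle (2 * π) → ℂ))

lemma mulInf_coe (a b : Linf) :
    (mulInf a b : AddCircle (2 * π) → ℂ) =ᵐ[μT] fun x => a x * b x :=
  (MemLp.coeFn_toLp _)

/-- Complex conjugation on `Lp`. -/
def conjLp {p : ℝ≥0∞} [Fact (1 ≤ p)] (f : Lp ℂ p μT) : Lp ℂ p μT :=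
  MemLp.toLp (fun x => conj (f x))
    ⟨continuous_star.comp_aestronglyMeasurable (Lp.aestronglyMeasurable f),
      by
        rw [eLpNorm_congr_norm_ae (g := (f : AddCircle (2 * π) → ℂ))
          (Filter.Eventually.of_forall fun x => by simp)]
        exact (Lp.memLp f).2⟩

lemma conjLp_coe {p : ℝ≥0∞} [Fact (1 ≤ p)] (f : Lp ℂ p μT) :
    (conjLp f : AddCircle (2 * π) → ℂ) =ᵐ[μT] fun x => conj (f x) :=
  (MemLp.coeFn_toLp _)

/-- The Hardy space `H²`, as the subspace of `L²(𝕋)` of functions whose negative Fourier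
coefficients vanish. -/
def Hardy : Submodule ℂ L2 where
  carrier := {f | ∀ n : ℤ, n < 0 → fourierBasis.repr f n = 0}
  add_mem' := fun hf hg n hn => by simp [hf n hn, hg n hn]
  zero_mem' := fun n hn => by simp
  smul_mem' := fun c f hf n hn => by simp [hf n hn]

lemma hardy_isClosed : IsClosed (Hardy : Set L2) := by
  have h : (Hardy : Set L2)
      = ⋂ n : ℤ, ⋂ _ : n < 0, {f : L2 | fourierBasis.repr f n = 0} := by
    ext f
    simp [Hardy, Set.mem_iInter]
  rw [h]
  refine isClosed_iInter fun n => isClosed_iInter fun hn => ?_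
  have hc : Continuous fun f : L2 => fourierBasis.repr f n := by
    have : (fun f : L2 => fourierBasis.repr f n)
        = fun f : L2 => (innerSL ℂ (fourierBasis n : L2)) f := by
      ext f
      rw [HilbertBasis.repr_apply_apply]
      rfl
    rw [this]
    exact (innerSL ℂ (fourierBasis n : L2)).continuous
  exact isClosed_eq hc continuous_const

instance : CompleteSpace Hardy := hardy_isClosed.completeSpace_coe

/-- The Riesz projection `P⁺ : L² → L²`, i.e. the orthogonal projection onto `H²`. -/
def Pplus : L2 →L[ℂ] L2 := Hardy.subtypeL.comp Hardy.orthogonalProjectionOnto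

/-- The complementary projection `P⁻ = I - P⁺`. -/
def Pminus : L2 →L[ℂ] L2 := ContinuousLinearMap.id ℂ L2 - Pplus

lemma mul2_norm_le (a : Linf) (f : L2) : ‖mul2 a f‖ ≤ ‖a‖ * ‖f‖ := by
  rw [mul2, Lp.norm_toLp]
  have h := eLpNorm_smul_le_eLpNorm_top_mul_eLpNorm 2
    (Lp.aestronglyMeasurable f) (φ := (a : AddCircle (2 * π) → ℂ))
  refine le_trans (ENNReal.toReal_mono ?_ h) ?_
  · exact ENNReal.mul_ne_top (Lp.memLp a).2.ne (Lp.memLp f).2.ne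
  · rw [ENNReal.toReal_mul, Lp.norm_def, Lp.norm_def]

/-- Multiplication by an `L^∞` function `a`, as a bounded operator `M_a` on `L²`. -/
def Mult (a : Linf) : L2 →L[ℂ] L2 :=
  LinearMap.mkContinuous
    { toFun := mul2 a
      map_add' := fun f g => by
        refine Lp.ext ?_
        filter_upwards [mul2_coe a (f + g), mul2_coe a f, mul2_coe a g,
          Lp.coeFn_add f g, Lp.coeFn_add (mul2 a f) (mul2 a g)] with x h1 h2 h3 h4 h5
        simp only [h1, h5, Pi.add_apply, h2, h3, h4, mul_add]
      map_smul' := fun c f => by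
        refine Lp.ext ?_
        filter_upwards [mul2_coe a (c • f), mul2_coe a f,
          Lp.coeFn_smul c f, Lp.coeFn_smul c (mul2 a f)] with x h1 h2 h3 h4
        simp only [h1, h4, Pi.smul_apply, h2, h3, smul_eq_mul, RingHom.id_apply]
        ring }
    ‖a‖ (fun f => mul2_norm_le a f)

/-- The paired operator `S_{a,b} = a P⁺ + b P⁻` on `L²(𝕋)`. -/
def pairedS (a b : Linf) : L2 →L[ℂ] L2 :=
  (Mult a).comp Pplus + (Mult b).comp Pminus

/-- The transposed paired operator `Σ_{a,b} = P⁺ a + P⁻ b` on `L²(𝕋)`. -/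
def pairedSigma (a b : Linf) : L2 →L[ℂ] L2 :=
  Pplus.comp (Mult a) + Pminus.comp (Mult b)

/-- Membership in `H^∞`: an `L^∞` function whose negative Fourier coefficients vanish. -/
def MemHinf (a : Linf) : Prop := ∀ n : ℤ, n < 0 → fourierCoeff (a : AddCircle (2 * π) → ℂ) n = 0

/-- A pair `{a,b}` is nondegenerate if `a`, `b` and `a - b` are all nonzero a.e. on `𝕋`. -/
def Nondegenerate (a b : Linf) : Prop :=
  (∀ᵐ x ∂μT, a x ≠ 0) ∧ (∀ᵐ x ∂μT, b x ≠ 0) ∧ (∀ᵐ x ∂μT, a x - b x ≠ 0)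

/-!
Upper bound: `S_{a,b} f = a P⁺f + b P⁻f` with `‖P⁺f‖² + ‖P⁻f‖² = ‖f‖²`, and
`u + v ≤ √2 · √(u² + v²)`.

Lower bound: `‖M_a‖ = ‖a‖_∞` (test `M_a` on the indicator of `{|a| > c}`), and
`‖M_a‖ ≤ ‖S_{a,b}‖`. For the latter, multiplication by `e_n` is an isometry of `L²` that does not
change `|a f|`; a trigonometric polynomial `g` of degree `N` is moved into `H²` by `e_{N+1}`,
where `S_{a,b}` acts as `M_a`, so `‖a g‖ ≤ ‖S_{a,b}‖ ‖g‖`, and trigonometric polynomials are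
dense. Symmetrically `e_{-N-1} g ∈ (H²)^⊥`, where `S_{a,b}` acts as `M_b`.
-/

theorem Submodule.opNorm_comp_starProjection_add_comp_sub_le {𝕜 E F : Type*} [RCLike 𝕜]
    [NormedAddCommGroup E] [InnerProductSpace 𝕜 E] [SeminormedAddCommGroup F] [NormedSpace 𝕜 F]
    (K : Submodule 𝕜 E) [K.HasOrthogonalProjection] (A B : E →L[𝕜] F) :
    ‖A ∘L K.starProjection + B ∘L (ContinuousLinearMap.id 𝕜 E - K.starProjection)‖
      ≤ √2 * max ‖A‖ ‖B‖ := by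
  refine ContinuousLinearMap.opNorm_le_bound _ (by positivity) fun x => ?_
  set P := K.starProjection
  have hpyth : ‖P x‖ ^ 2 + ‖x - P x‖ ^ 2 = ‖x‖ ^ 2 := by
    rw [norm_sq_eq_add_norm_sq_starProjection x K, K.starProjection_orthogonal_val]
  have hsum : ‖P x‖ + ‖x - P x‖ ≤ √2 * ‖x‖ := by
    rw [← Real.sqrt_sq (norm_nonneg x), ← Real.sqrt_mul zero_le_two, ← hpyth]
    exact Real.le_sqrt_of_sq_le add_sq_le
  calc ‖A (P x) + B (x - P x)‖ ≤ ‖A‖ * ‖P x‖ + ‖B‖ * ‖x - P x‖ :=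
        norm_add_le_of_le (A.le_opNorm _) (B.le_opNorm _)
    _ ≤ max ‖A‖ ‖B‖ * (‖P x‖ + ‖x - P x‖) := by
        rw [mul_add]; gcongr
        exacts [le_max_left _ _, le_max_right _ _]
    _ ≤ max ‖A‖ ‖B‖ * (√2 * ‖x‖) := by gcongr
    _ = √2 * max ‖A‖ ‖B‖ * ‖x‖ := by ring

theorem opNorm_mult_le (a : Linf) : ‖Mult a‖ ≤ ‖a‖ :=
  LinearMap.mkContinuous_norm_le _ (norm_nonneg a) _

theorem MeasureTheory.Lp.measure_lt_norm_ne_zero {α E : Type*} [MeasurableSpace α]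
    {μ : Measure α} [IsFiniteMeasure μ] [NormedAddCommGroup E] (f : Lp E ∞ μ) {c : ℝ}
    (hc : 0 ≤ c) (hcf : c < ‖f‖) : μ {x | c < ‖f x‖} ≠ 0 := by
  intro h0
  have hle : ∀ᵐ x ∂μ, ‖f x‖ ≤ c := by
    rw [ae_iff]
    simpa only [not_le] using h0
  have := Lp.norm_le_of_ae_bound hc hle
  simp only [ENNReal.toReal_top, inv_zero, Real.rpow_zero, one_mul] at this
  linarith

theorem MeasureTheory.Lp.norm_eq_norm_of_ae_norm_eq {α E F : Type*} [MeasurableSpace α]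
    {μ : Measure α} {p : ℝ≥0∞} [NormedAddCommGroup E] [NormedAddCommGroup F]
    {f : Lp E p μ} {g : Lp F p μ} (h : ∀ᵐ x ∂μ, ‖f x‖ = ‖g x‖) : ‖f‖ = ‖g‖ :=
  le_antisymm (Lp.norm_le_norm_of_ae_le (h.mono fun _ hx => hx.le))
    (Lp.norm_le_norm_of_ae_le (h.mono fun _ hx => hx.ge))

theorem mul_norm_le_norm_mul2_indicatorConstLp (a : Linf) {E : Set (AddCircle (2 * π))}
    (hE : MeasurableSet E) (hμE : μT E ≠ ∞) {c : ℝ} (hc : 0 ≤ c) (ha : ∀ x ∈ E, c ≤ ‖a x‖) :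
    c * ‖indicatorConstLp 2 hE hμE (1 : ℂ)‖ ≤ ‖mul2 a (indicatorConstLp 2 hE hμE (1 : ℂ))‖ := by
  rw [← Complex.norm_of_nonneg hc, ← norm_smul]
  refine Lp.norm_le_norm_of_ae_le ?_
  filter_upwards [Lp.coeFn_smul (c : ℂ) (indicatorConstLp 2 hE hμE (1 : ℂ) : L2),
    mul2_coe a (indicatorConstLp 2 hE hμE (1 : ℂ)),
    indicatorConstLp_coeFn (p := 2) (hs := hE) (hμs := hμE) (c := (1 : ℂ))] with x h1 h2 h3
  rw [h1, h2, Pi.smul_apply, h3, smul_eq_mul, norm_mul, norm_mul]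
  by_cases hx : x ∈ E
  · rw [Complex.norm_of_nonneg hc]
    gcongr
    exact ha x hx
  · simp [Set.indicator_of_notMem hx]

theorem norm_le_opNorm_mult (a : Linf) : ‖a‖ ≤ ‖Mult a‖ := by
  refine le_of_forall_lt_imp_le_of_dense fun c hc => ?_
  rcases lt_or_ge c 0 with hc0 | hc0
  · exact hc0.le.trans (norm_nonneg _)
  set E := {x | c < ‖a x‖}
  have hE : MeasurableSet E :=
    measurableSet_lt measurable_const (Lp.stronglyMeasurable a).measurable.norm
  have hμE : μT E ≠ ∞ := measure_ne_top _ _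
  set f : L2 := indicatorConstLp 2 hE hμE (1 : ℂ)
  have hf : 0 < ‖f‖ := by
    have : 0 < μT.real E := ENNReal.toReal_pos (Lp.measure_lt_norm_ne_zero a hc0 hc) hμE
    rw [norm_indicatorConstLp two_ne_zero ENNReal.ofNat_ne_top, norm_one, one_mul]
    positivity
  refine le_of_mul_le_mul_right ?_ hf
  calc c * ‖f‖ ≤ ‖mul2 a f‖ :=
        mul_norm_le_norm_mul2_indicatorConstLp a hE hμE hc0 fun _ hx => le_of_lt hx
    _ ≤ ‖Mult a‖ * ‖f‖ := (Mult a).le_opNorm f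

def fourierLinf (n : ℤ) : Linf :=
  MemLp.toLp (fun x => fourier n x)
    (memLp_top_of_bound (map_continuous (fourier n)).aestronglyMeasurable 1
      (Filter.Eventually.of_forall fun x => by rw [fourier_apply, Circle.norm_coe]))

theorem fourierLinf_coe (n : ℤ) :
    (fourierLinf n : AddCircle (2 * π) → ℂ) =ᵐ[μT] fun x => fourier n x :=
  MemLp.coeFn_toLp _

theorem norm_fourierLinf_apply (n : ℤ) : ∀ᵐ x ∂μT, ‖fourierLinf n x‖ = 1 := by
  filter_upwards [fourierLinf_coe n] with x hx
  rw [hx, fourier_apply, Circle.norm_coe]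

theorem norm_mul2_fourierLinf (n : ℤ) (f : L2) : ‖mul2 (fourierLinf n) f‖ = ‖f‖ := by
  refine Lp.norm_eq_norm_of_ae_norm_eq ?_
  filter_upwards [mul2_coe (fourierLinf n) f, norm_fourierLinf_apply n] with x h1 h2
  rw [h1, norm_mul, h2, one_mul]

theorem norm_mul2_mul2_fourierLinf (a : Linf) (n : ℤ) (f : L2) :
    ‖mul2 a (mul2 (fourierLinf n) f)‖ = ‖mul2 a f‖ := by
  refine Lp.norm_eq_norm_of_ae_norm_eq ?_
  filter_upwards [mul2_coe a (mul2 (fourierLinf n) f), mul2_coe a f,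
    mul2_coe (fourierLinf n) f, norm_fourierLinf_apply n] with x h1 h2 h3 h4
  rw [h1, h2, h3, norm_mul, norm_mul, norm_mul, h4, one_mul]

theorem fourierBasis_repr_mul2_fourierLinf (n : ℤ) (f : L2) (m : ℤ) :
    fourierBasis.repr (mul2 (fourierLinf n) f) m = fourierBasis.repr f (m - n) := by
  rw [fourierBasis_repr, fourierBasis_repr, fourierCoeff, fourierCoeff]
  refine integral_congr_ae ?_
  filter_upwards [mul2_coe (fourierLinf n) f, fourierLinf_coe n] with x h1 h2
  rw [h1, h2, smul_eq_mul, smul_eq_mul, ← mul_assoc, ← fourier_add]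
  ring_nf

theorem exists_fourierBasis_repr_eq_zero_of_mem_span {g : L2}
    (hg : g ∈ Submodule.span ℂ (Set.range (fourierBasis (T := 2 * π)))) :
    ∃ N : ℕ, ∀ m : ℤ, (N : ℤ) < |m| → fourierBasis.repr g m = 0 := by
  classical
  induction hg using Submodule.span_induction with
  | mem x hx =>
    obtain ⟨k, rfl⟩ := hx
    refine ⟨k.natAbs, fun m hm => ?_⟩
    have hne : m ≠ k := by
      rintro rfl
      rw [Int.abs_eq_natAbs] at hm
      omega
    rw [fourierBasis.repr_self, lp.single_apply, Pi.single_eq_of_ne hne]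
  | zero => exact ⟨0, fun m _ => by simp⟩
  | add x y _ _ hx hy =>
    obtain ⟨N₁, h₁⟩ := hx
    obtain ⟨N₂, h₂⟩ := hy
    refine ⟨max N₁ N₂, fun m hm => ?_⟩
    push_cast at hm
    simp [h₁ m ((le_max_left _ _).trans_lt hm), h₂ m ((le_max_right _ _).trans_lt hm)]
  | smul c x _ hx =>
    obtain ⟨N, hN⟩ := hx
    exact ⟨N, fun m hm => by simp [hN m hm]⟩

theorem mem_hardy_orthogonal_of_fourierBasis_repr_eq_zero {f : L2}
    (hf : ∀ n : ℤ, 0 ≤ n → fourierBasis.repr f n = 0) : f ∈ Hardyᗮ := by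
  refine (Submodule.mem_orthogonal _ _).mpr fun h hh => ?_
  have hterm : ∀ i : ℤ, inner ℂ h (fourierBasis i) * inner ℂ (fourierBasis i) f = 0 := by
    intro i
    rcases lt_or_ge i 0 with hi | hi
    · have h0 := hh i hi
      rw [fourierBasis.repr_apply_apply] at h0
      rw [← inner_conj_symm, h0, map_zero, zero_mul]
    · have h0 := hf i hi
      rw [fourierBasis.repr_apply_apply] at h0
      rw [h0, mul_zero]
  have hsum := fourierBasis.hasSum_inner_mul_inner h f
  simp only [hterm] at hsum
  exact hsum.unique hasSum_zero

theorem pairedS_apply_of_mem_hardy (a b : Linf) {f : L2} (hf : f ∈ Hardy) :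
    pairedS a b f = mul2 a f := by
  have hplus : Pplus f = f := Hardy.starProjection_eq_self_iff.mpr hf
  change Mult a (Pplus f) + Mult b (f - Pplus f) = mul2 a f
  rw [hplus, sub_self, map_zero, add_zero]
  rfl

theorem pairedS_apply_of_mem_hardy_orthogonal (a b : Linf) {f : L2} (hf : f ∈ Hardyᗮ) :
    pairedS a b f = mul2 b f := by
  have hplus : Pplus f = 0 := Hardy.starProjection_apply_eq_zero_iff.mpr hf
  change Mult a (Pplus f) + Mult b (f - Pplus f) = mul2 b f
  rw [hplus, map_zero, zero_add, sub_zero]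
  rfl

theorem opNorm_mult_le_of_shift (T : L2 →L[ℂ] L2) (a : Linf)
    (h : ∀ g ∈ Submodule.span ℂ (Set.range (fourierBasis (T := 2 * π))), ∃ n : ℤ,
      T (mul2 (fourierLinf n) g) = mul2 a (mul2 (fourierLinf n) g)) :
    ‖Mult a‖ ≤ ‖T‖ := by
  refine (Mult a).opNorm_le_bound (norm_nonneg T) fun f => ?_
  have hdense : Dense (Submodule.span ℂ (Set.range (fourierBasis (T := 2 * π))) : Set L2) :=
    Submodule.dense_iff_topologicalClosure_eq_top.mpr fourierBasis.dense_span
  refine hdense.induction (P := fun f => ‖Mult a f‖ ≤ ‖T‖ * ‖f‖) (fun g hg => ?_)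
    (isClosed_le (Mult a).continuous.norm (continuous_const.mul continuous_norm)) f
  obtain ⟨n, hn⟩ := h g hg
  calc ‖Mult a g‖ = ‖mul2 a (mul2 (fourierLinf n) g)‖ := (norm_mul2_mul2_fourierLinf a n g).symm
    _ = ‖T (mul2 (fourierLinf n) g)‖ := by rw [hn]
    _ ≤ ‖T‖ * ‖mul2 (fourierLinf n) g‖ := T.le_opNorm _
    _ = ‖T‖ * ‖g‖ := by rw [norm_mul2_fourierLinf]

theorem opNorm_mult_le_opNorm_pairedS_left (a b : Linf) : ‖Mult a‖ ≤ ‖pairedS a b‖ := by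
  refine opNorm_mult_le_of_shift _ a fun g hg => ?_
  obtain ⟨N, hN⟩ := exists_fourierBasis_repr_eq_zero_of_mem_span hg
  refine ⟨N + 1, pairedS_apply_of_mem_hardy a b fun m hm => ?_⟩
  rw [fourierBasis_repr_mul2_fourierLinf]
  exact hN _ (by rw [abs_of_neg (by omega)]; omega)

theorem opNorm_mult_le_opNorm_pairedS_right (a b : Linf) : ‖Mult b‖ ≤ ‖pairedS a b‖ := by
  refine opNorm_mult_le_of_shift _ b fun g hg => ?_
  obtain ⟨N, hN⟩ := exists_fourierBasis_repr_eq_zero_of_mem_span hg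
  refine ⟨-(N + 1), pairedS_apply_of_mem_hardy_orthogonal a b
    (mem_hardy_orthogonal_of_fourierBasis_repr_eq_zero fun m hm => ?_)⟩
  rw [fourierBasis_repr_mul2_fourierLinf]
  exact hN _ (by rw [abs_of_pos (by omega)]; omega)

/-- `max(‖a‖_∞, ‖b‖_∞) ≤ ‖S_{a,b}‖ ≤ √2 · max(‖a‖_∞, ‖b‖_∞)`. -/
theorem statement2 (a b : Linf) :
    max ‖a‖ ‖b‖ ≤ ‖pairedS a b‖ ∧ ‖pairedS a b‖ ≤ Real.sqrt 2 * max ‖a‖ ‖b‖ := by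
  refine ⟨max_le ?_ ?_, ?_⟩
  · exact (norm_le_opNorm_mult a).trans (opNorm_mult_le_opNorm_pairedS_left a b)
  · exact (norm_le_opNorm_mult b).trans (opNorm_mult_le_opNorm_pairedS_right a b)
  · calc ‖pairedS a b‖ ≤ √2 * max ‖Mult a‖ ‖Mult b‖ :=
          Hardy.opNorm_comp_starProjection_add_comp_sub_le (Mult a) (Mult b)
      _ ≤ √2 * max ‖a‖ ‖b‖ := by gcongr <;> exact opNorm_mult_le _

end
end

section
/- For a, ã, b, b̃ ∈ L^∞(T) with {a,b}, {ã,b̃} nondegenerate, S_{a,b} and S_{ã,b̃} commute if and only if (a−b)(P^- M_ã P^+ − P^+ M_b̃ P^-) = (ã−b̃)(P^- M_a P^+ − P^+ M_b P^-) as operators on L^2(T). -/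
open MeasureTheory Complex Real AddCircle
open scoped ENNReal ComplexConjugate

noncomputable section

/-!
Expanding the product, `S_{a,b} S_{ã,b̃} = a ã P⁺ + b b̃ P⁻ − (a − b)(P⁻ ã P⁺ − P⁺ b̃ P⁻)`,
an identity valid in any ring (it does not even use `P⁺² = P⁺`). Multiplication operators
commute, so the first two terms are symmetric in the two pairs, and `S_{a,b}` commutes with
`S_{ã,b̃}` exactly when the third terms agree.
-/

section PairedRing

variable {R : Type*} [Ring R]

lemma pair_mul_pair (P A B A' B' : R) :
    (A * P + B * (1 - P)) * (A' * P + B' * (1 - P))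
      = A * A' * P + B * B' * (1 - P)
        - (A - B) * ((1 - P) * (A' * P) - P * (B' * (1 - P))) := by
  noncomm_ring

lemma pair_commute_iff (P : R) {A B A' B' : R} (hA : Commute A A') (hB : Commute B B') :
    Commute (A * P + B * (1 - P)) (A' * P + B' * (1 - P))
      ↔ (A - B) * ((1 - P) * (A' * P) - P * (B' * (1 - P)))
        = (A' - B') * ((1 - P) * (A * P) - P * (B * (1 - P))) := by
  rw [Commute, SemiconjBy, pair_mul_pair, pair_mul_pair, hA.eq, hB.eq, sub_right_inj]

end PairedRing

lemma Mult_commute (a b : Linf) : Commute (Mult a) (Mult b) := by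
  ext1 f
  refine Lp.ext ?_
  filter_upwards [mul2_coe a (mul2 b f), mul2_coe b f, mul2_coe b (mul2 a f),
    mul2_coe a f] with x hab hb hba ha
  change (mul2 a (mul2 b f) : AddCircle (2 * π) → ℂ) x
      = (mul2 b (mul2 a f) : AddCircle (2 * π) → ℂ) x
  rw [hab, hba, hb, ha, mul_left_comm]

lemma Mult_sub (a b : Linf) : Mult (a - b) = Mult a - Mult b := by
  ext1 f
  refine Lp.ext ?_
  filter_upwards [mul2_coe (a - b) f, mul2_coe a f, mul2_coe b f,
    Lp.coeFn_sub a b, Lp.coeFn_sub (mul2 a f) (mul2 b f)] with x hab ha hb hsub hsub'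
  change (mul2 (a - b) f : AddCircle (2 * π) → ℂ) x = (mul2 a f - mul2 b f : L2) x
  rw [hab, hsub', Pi.sub_apply, ha, hb, hsub, Pi.sub_apply, sub_mul]

theorem statement7_general (a b ta tb : Linf) :
    (pairedS a b).comp (pairedS ta tb) = (pairedS ta tb).comp (pairedS a b)
      ↔ (Mult (a - b)).comp
            (Pminus.comp ((Mult ta).comp Pplus) - Pplus.comp ((Mult tb).comp Pminus))
        = (Mult (ta - tb)).comp
            (Pminus.comp ((Mult a).comp Pplus) - Pplus.comp ((Mult b).comp Pminus)) := by
  rw [Mult_sub, Mult_sub]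
  exact pair_commute_iff Pplus (Mult_commute a ta) (Mult_commute b tb)

/-- `S_{a,b}` and `S_{ã,b̃}` commute iff
`(a−b)(P⁻ M_ã P⁺ − P⁺ M_b̃ P⁻) = (ã−b̃)(P⁻ M_a P⁺ − P⁺ M_b P⁻)`. -/
theorem statement7 (a b ta tb : Linf)
    (h1 : Nondegenerate a b) (h2 : Nondegenerate ta tb) :
    (pairedS a b).comp (pairedS ta tb) = (pairedS ta tb).comp (pairedS a b)
      ↔ (Mult (a - b)).comp
            (Pminus.comp ((Mult ta).comp Pplus) - Pplus.comp ((Mult tb).comp Pminus))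
        = (Mult (ta - tb)).comp
            (Pminus.comp ((Mult a).comp Pplus) - Pplus.comp ((Mult b).comp Pminus)) :=
  statement7_general a b ta tb

end
end

section
/- Let {a,b} and {ã,b̃} be nondegenerate pairs in L^∞(T). If ker S_{a,b} ∩ ker S_{ã,b̃} ≠ {0}, then ker S_{a,b} = ker S_{ã,b̃}. -/
open MeasureTheory Complex Real AddCircle
open scoped ENNReal ComplexConjugate

noncomputable section

/-!
A nonzero `g ∈ H²` vanishes only on a null set. Indeed, if `w g = 0` with `w ∈ L^∞`, then
`M = H² ∩ ker M_w` is a closed subspace invariant under the shift `S = M_{e^{iθ}}`, and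
`M ≠ closure (S M)` since the Fourier coefficients of `⋂ₙ Sⁿ H²` all vanish. A nonzero
`φ ∈ M ⊖ closure (S M)` is wandering: `⟪Sᵏ φ, φ⟫ = 0` for `k ≥ 1`, so the measure `|φ|² dθ`
has vanishing nonzero Fourier coefficients and is a multiple of `dθ`. Hence `φ ≠ 0` a.e., and
`w φ = 0` forces `w = 0`.

If `f ≠ 0` lies in both kernels, then `P⁺f ≠ 0` (otherwise `b P⁻f = 0` gives `f = 0`), and
eliminating `P⁻f` from `a P⁺f + b P⁻f = 0 = ã P⁺f + b̃ P⁻f` gives `(a b̃ - ã b) P⁺f = 0`, so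
`a b̃ = ã b` a.e. This proportionality makes each kernel contain the other.
-/

open scoped InnerProductSpace

section Wandering

variable {𝕜 E : Type*} [RCLike 𝕜] [NormedAddCommGroup E] [InnerProductSpace 𝕜 E] [CompleteSpace E]

theorem exists_ne_zero_inner_pow_succ_eq_zero (S : E →L[𝕜] E) {M : Submodule 𝕜 E}
    (hM : IsClosed (M : Set E)) (hSM : ∀ x ∈ M, S x ∈ M)
    (hne : ¬ M ≤ (M.map (S : E →ₗ[𝕜] E)).topologicalClosure) :
    ∃ φ ∈ M, φ ≠ 0 ∧ ∀ k : ℕ, ⟪(S ^ (k + 1)) φ, φ⟫_𝕜 = 0 := by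
  set N := (M.map (S : E →ₗ[𝕜] E)).topologicalClosure
  have hNM : N ≤ M := Submodule.topologicalClosure_minimal _
    (Submodule.map_le_iff_le_comap.2 fun x hx => hSM x hx) hM
  have hpow : ∀ x ∈ M, ∀ k : ℕ, (S ^ k) x ∈ M := fun x hx k => by
    induction k with
    | zero => simpa using hx
    | succ k ih => rw [pow_succ', mul_apply_eq_comp]; exact hSM _ ih
  obtain ⟨ψ, hψM, hψN⟩ := Set.not_subset.1 hne
  have hφM : ψ - N.starProjection ψ ∈ M := M.sub_mem hψM (hNM (N.starProjection_apply_mem ψ))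
  refine ⟨_, hφM, sub_ne_zero.2 fun h => hψN (h ▸ N.starProjection_apply_mem ψ), fun k => ?_⟩
  refine Submodule.inner_right_of_mem_orthogonal ?_ (N.sub_starProjection_mem_orthogonal ψ)
  rw [pow_succ', mul_apply_eq_comp]
  exact Submodule.le_topologicalClosure _ ⟨_, hpow _ hφM k, rfl⟩

end Wandering

namespace AddCircle

variable {T : ℝ} [Fact (0 < T)]

def integralCLM (μ : Measure (AddCircle T)) [IsFiniteMeasure μ] : C(AddCircle T, ℂ) →L[ℂ] ℂ :=
  (L1.integralCLM' ℂ).comp (ContinuousMap.toLp 1 μ ℂ)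

lemma integralCLM_apply (μ : Measure (AddCircle T)) [IsFiniteMeasure μ] (f : C(AddCircle T, ℂ)) :
    integralCLM μ f = ∫ x, f x ∂μ := by
  rw [integralCLM, ContinuousLinearMap.comp_apply, ← L1.integral_eq', L1.integral_eq_integral]
  exact integral_congr_ae (ContinuousMap.coeFn_toLp μ f)

lemma integral_fourier_haarAddCircle {n : ℤ} (hn : n ≠ 0) :
    ∫ x, fourier (T := T) n x ∂haarAddCircle = 0 := by
  have h := congrFun (fourierCoeff_fourier (T := T) n) 0
  rw [fourierCoeff, Pi.single_apply, if_neg (Ne.symm hn)] at h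
  simpa [fourier_zero] using h

theorem eq_smul_haarAddCircle_of_integral_fourier_eq_zero (ν : Measure (AddCircle T))
    [IsFiniteMeasure ν] (h : ∀ n : ℤ, n ≠ 0 → ∫ x, fourier n x ∂ν = 0) :
    ν = ν Set.univ • haarAddCircle := by
  have hCLM : integralCLM ν = (ν Set.univ).toReal • integralCLM haarAddCircle := by
    refine ContinuousLinearMap.ext_on (s := Set.range fourier) ?_ ?_
    · rw [dense_iff_closure_eq, ← Submodule.topologicalClosure_coe, span_fourier_closure_eq_top]
      rfl
    · rintro _ ⟨n, rfl⟩
      rw [FunLike.coe_smul, Pi.smul_apply, integralCLM_apply, integralCLM_apply]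
      rcases eq_or_ne n 0 with rfl | hn
      · simp [Measure.real]
      · rw [h n hn, integral_fourier_haarAddCircle hn, smul_zero]
  have := (haarAddCircle (T := T)).smul_finite (measure_ne_top ν Set.univ)
  refine ext_of_forall_integral_eq_of_IsFiniteMeasure fun f => ?_
  have hf := congrArg (fun L => L ⟨fun x => (f x : ℂ), continuous_ofReal.comp f.continuous⟩) hCLM
  simp only [FunLike.coe_smul, Pi.smul_apply, integralCLM_apply, ContinuousMap.coe_mk,
    integral_complex_ofReal, Complex.real_smul, ← ofReal_mul] at hf
  rw [integral_smul_measure, smul_eq_mul]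
  exact ofReal_injective hf

end AddCircle

lemma Mult_coe (a : Linf) (f : L2) :
    (Mult a f : AddCircle (2 * π) → ℂ) =ᵐ[μT] fun x => a x * f x := mul2_coe a f

lemma Mult_comm_apply (a b : Linf) (f : L2) : Mult a (Mult b f) = Mult b (Mult a f) := by
  refine Lp.ext ?_
  filter_upwards [Mult_coe a (Mult b f), Mult_coe b f, Mult_coe b (Mult a f), Mult_coe a f]
    with x h1 h2 h3 h4
  rw [h1, h2, h3, h4, mul_left_comm]

def shift : L2 →L[ℂ] L2 := Mult (ContinuousMap.toLp ∞ μT ℂ (fourier 1))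

lemma shift_coe (f : L2) :
    (shift f : AddCircle (2 * π) → ℂ) =ᵐ[μT] fun x => fourier 1 x * f x := by
  filter_upwards [Mult_coe (ContinuousMap.toLp ∞ μT ℂ (fourier 1)) f,
    ContinuousMap.coeFn_toLp (p := ∞) μT (𝕜 := ℂ) (fourier 1)] with x h1 h2
  rw [shift, h1, h2]

lemma shift_pow_coe (k : ℕ) (f : L2) :
    ((shift ^ k) f : AddCircle (2 * π) → ℂ) =ᵐ[μT] fun x => fourier k x * f x := by
  induction k with
  | zero => simp
  | succ k ih =>
    rw [pow_succ', mul_apply_eq_comp]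
    filter_upwards [shift_coe ((shift ^ k) f), ih] with x h1 h2
    rw [h1, h2, ← mul_assoc, ← fourier_add, add_comm]
    push_cast
    rfl

lemma repr_shift (f : L2) (n : ℤ) :
    fourierBasis.repr (shift f) n = fourierBasis.repr f (n - 1) := by
  rw [fourierBasis_repr, fourierBasis_repr, fourierCoeff_congr_ae (shift_coe f)]
  refine integral_congr_ae (Filter.Eventually.of_forall fun x => ?_)
  simp only [smul_eq_mul, ← mul_assoc, ← fourier_add]
  ring_nf

lemma isClosed_setOf_repr_eq_zero (N : ℤ) :
    IsClosed {f : L2 | ∀ n < N, fourierBasis.repr f n = 0} := by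
  simp only [Set.ofPred_forall]
  exact isClosed_iInter fun n => isClosed_iInter fun _ =>
    isClosed_eq ((lp.evalCLM ℂ (fun _ : ℤ => ℂ) 2 n).continuous.comp fourierBasis.repr.continuous)
      continuous_const

lemma eq_bot_of_le_closure_map_shift {M : Submodule ℂ L2} (hM : M ≤ Hardy)
    (hMS : M ≤ (M.map (shift : L2 →ₗ[ℂ] L2)).topologicalClosure) : M = ⊥ := by
  have hcoeff : ∀ N : ℕ, ∀ f ∈ M, ∀ n < (N : ℤ), fourierBasis.repr f n = 0 := by
    intro N
    induction N with
    | zero => exact fun f hf n hn => hM hf n hn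
    | succ N ih =>
      intro f hf
      have hf' := hMS hf
      rw [← SetLike.mem_coe, Submodule.topologicalClosure_coe] at hf'
      refine closure_minimal ?_ (isClosed_setOf_repr_eq_zero _) hf'
      rintro _ ⟨g, hg, rfl⟩ n hn
      rw [ContinuousLinearMap.coe_coe, repr_shift]
      exact ih g hg _ (by push_cast at hn; omega)
  refine (Submodule.eq_bot_iff M).2 fun f hf => fourierBasis.repr.injective ?_
  ext n
  simpa using hcoeff (n.toNat + 1) f hf n (by push_cast; omega)

lemma inner_shift_pow_self (k : ℕ) (φ : L2) :
    ⟪(shift ^ k) φ, φ⟫_ℂ = ∫ x, fourier (-(k : ℤ)) x * ((‖φ x‖ ^ 2 : ℝ) : ℂ) ∂μT := by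
  rw [L2.inner_def]
  refine integral_congr_ae ?_
  filter_upwards [shift_pow_coe k φ] with x hx
  rw [hx, RCLike.inner_apply, map_mul, fourier_neg, mul_left_comm, RCLike.mul_conj]
  norm_cast

lemma ae_ne_zero_of_inner_shift_pow_eq_zero {φ : L2} (hφ : φ ≠ 0)
    (horth : ∀ k : ℕ, ⟪(shift ^ (k + 1)) φ, φ⟫_ℂ = 0) : ∀ᵐ x ∂μT, φ x ≠ 0 := by
  set ν := μT.withDensity fun x => ENNReal.ofReal (‖φ x‖ ^ 2)
  have hmeas : Measurable fun x => ENNReal.ofReal (‖φ x‖ ^ 2) :=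
    ENNReal.measurable_ofReal.comp ((Lp.stronglyMeasurable φ).measurable.norm.pow_const 2)
  have : IsFiniteMeasure ν :=
    isFiniteMeasure_withDensity_ofReal (Lp.memLp φ).norm.integrable_sq.2
  have hν : ν = ν Set.univ • μT := by
    refine eq_smul_haarAddCircle_of_integral_fourier_eq_zero ν fun n hn => ?_
    have hdens : ∀ m : ℤ,
        ∫ x, fourier m x ∂ν = ∫ x, fourier m x * ((‖φ x‖ ^ 2 : ℝ) : ℂ) ∂μT := by
      intro m
      rw [integral_withDensity_eq_integral_toReal_smul hmeas
        (Filter.Eventually.of_forall fun _ => ENNReal.ofReal_lt_top)]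
      refine integral_congr_ae (Filter.Eventually.of_forall fun x => ?_)
      dsimp only
      rw [ENNReal.toReal_ofReal (by positivity), Complex.real_smul, mul_comm]
    obtain ⟨k, rfl | rfl⟩ : ∃ k : ℕ, n = -(k + 1 : ℕ) ∨ n = (k + 1 : ℕ) :=
      ⟨n.natAbs - 1, by omega⟩
    · rw [hdens, ← inner_shift_pow_self, horth]
    · rw [hdens, ← conj_conj (∫ x, _ ∂μT), ← integral_conj]
      simp_rw [map_mul, conj_ofReal, ← fourier_neg]
      rw [← inner_shift_pow_self, horth, map_zero]
  have hνuniv : ν Set.univ ≠ 0 := by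
    refine fun h => hφ ((Lp.eq_zero_iff_ae_eq_zero).2 ?_)
    rw [withDensity_apply_eq_zero' hmeas.aemeasurable, Set.inter_univ] at h
    filter_upwards [ae_iff.2 h, Lp.coeFn_zero ℂ 2 μT] with x hx h0
    simpa [h0] using hx
  have hνzero : ν {x | φ x = 0} = 0 :=
    (withDensity_apply_eq_zero' hmeas.aemeasurable).2
      (measure_mono_null (fun x hx => hx.1 (by simp [show φ x = 0 from hx.2])) measure_empty)
  rw [hν, Measure.smul_apply, smul_eq_mul, mul_eq_zero, or_iff_right hνuniv] at hνzero
  exact ae_iff.2 (by simpa using hνzero)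

lemma Mult_eq_zero_iff (a : Linf) (f : L2) : Mult a f = 0 ↔ ∀ᵐ x ∂μT, a x * f x = 0 := by
  rw [Lp.eq_zero_iff_ae_eq_zero]
  exact ⟨fun h => (Mult_coe a f).symm.trans h, fun h => (Mult_coe a f).trans h⟩

lemma shift_mem_hardy {f : L2} (hf : f ∈ Hardy) : shift f ∈ Hardy := fun n hn => by
  rw [repr_shift]
  exact hf _ (by omega)

theorem ae_eq_zero_of_mul_eq_zero_of_mem_hardy (w : Linf) {g : L2} (hg : g ∈ Hardy) (hg0 : g ≠ 0)
    (h : ∀ᵐ x ∂μT, w x * g x = 0) : ∀ᵐ x ∂μT, w x = 0 := by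
  set M := Hardy ⊓ LinearMap.ker (Mult w : L2 →ₗ[ℂ] L2)
  have hM : IsClosed (M : Set L2) := hardy_isClosed.inter (Mult w).isClosed_ker
  have hSM : ∀ f ∈ M, shift f ∈ M := fun f ⟨hfH, hfK⟩ =>
    ⟨shift_mem_hardy hfH, by
      simp only [SetLike.mem_coe, LinearMap.mem_ker, ContinuousLinearMap.coe_coe] at hfK ⊢
      rw [shift, Mult_comm_apply, hfK, map_zero]⟩
  have hgM : g ∈ M := ⟨hg, (Mult_eq_zero_iff w g).2 h⟩
  have hne : ¬ M ≤ (M.map (shift : L2 →ₗ[ℂ] L2)).topologicalClosure := fun hle =>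
    hg0 ((Submodule.eq_bot_iff M).1 (eq_bot_of_le_closure_map_shift inf_le_left hle) g hgM)
  obtain ⟨φ, ⟨-, hφK⟩, hφ0, horth⟩ := exists_ne_zero_inner_pow_succ_eq_zero shift hM hSM hne
  filter_upwards [(Mult_eq_zero_iff w φ).1 hφK, ae_ne_zero_of_inner_shift_pow_eq_zero hφ0 horth]
    with x hx hφx
  exact (mul_eq_zero.1 hx).resolve_right hφx

theorem ae_ne_zero_of_mem_hardy {g : L2} (hg : g ∈ Hardy) (hg0 : g ≠ 0) :
    ∀ᵐ x ∂μT, g x ≠ 0 := by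
  have hZ : MeasurableSet {x | g x = 0} :=
    (Lp.stronglyMeasurable g).measurable (measurableSet_singleton 0)
  set χ : Linf := indicatorConstLp ∞ hZ (measure_ne_top μT _) (1 : ℂ)
  have hχ : ∀ᵐ x ∂μT, χ x = {x | g x = 0}.indicator (fun _ => 1) x := indicatorConstLp_coeFn
  have hχg : ∀ᵐ x ∂μT, χ x * g x = 0 := by
    filter_upwards [hχ] with x hx
    by_cases hgx : g x = 0 <;> simp [hx, hgx]
  filter_upwards [ae_eq_zero_of_mul_eq_zero_of_mem_hardy χ hg hg0 hχg, hχ] with x h0 hx hgx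
  simp [hx, hgx] at h0

lemma Pplus_mem_hardy (f : L2) : Pplus f ∈ Hardy := (Hardy.orthogonalProjectionOnto f).2

lemma Pplus_add_Pminus (f : L2) : Pplus f + Pminus f = f := add_sub_cancel _ _

lemma pairedS_eq_zero_iff (a b : Linf) (f : L2) :
    pairedS a b f = 0 ↔ ∀ᵐ x ∂μT, a x * Pplus f x + b x * Pminus f x = 0 := by
  have hcoe : (pairedS a b f : AddCircle (2 * π) → ℂ) =ᵐ[μT]
      fun x => a x * Pplus f x + b x * Pminus f x := by
    filter_upwards [Lp.coeFn_add (Mult a (Pplus f)) (Mult b (Pminus f)),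
      Mult_coe a (Pplus f), Mult_coe b (Pminus f)] with x h h₁ h₂
    rw [show pairedS a b f = Mult a (Pplus f) + Mult b (Pminus f) from rfl, h, Pi.add_apply,
      h₁, h₂]
  rw [Lp.eq_zero_iff_ae_eq_zero]
  exact ⟨fun h => hcoe.symm.trans h, fun h => hcoe.trans h⟩

lemma Pplus_ne_zero_of_pairedS_eq_zero {a b : Linf} {f : L2} (hb : ∀ᵐ x ∂μT, b x ≠ 0)
    (hf : f ≠ 0) (h : pairedS a b f = 0) : Pplus f ≠ 0 := by
  intro hp
  have hm : Pminus f = 0 := by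
    rw [Lp.eq_zero_iff_ae_eq_zero]
    filter_upwards [(pairedS_eq_zero_iff a b f).1 h, hb, hp ▸ Lp.coeFn_zero ℂ 2 μT]
      with x hx hbx hpx
    simpa [hpx, hbx] using hx
  exact hf (by rw [← Pplus_add_Pminus f, hp, hm, add_zero])

lemma ker_pairedS_le_of_mul_eq {a b ta tb : Linf} (ha : ∀ᵐ x ∂μT, a x ≠ 0)
    (h : ∀ᵐ x ∂μT, a x * tb x = ta x * b x) :
    LinearMap.ker (pairedS a b : L2 →ₗ[ℂ] L2) ≤ LinearMap.ker (pairedS ta tb : L2 →ₗ[ℂ] L2) := by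
  intro f hf
  simp only [LinearMap.mem_ker, ContinuousLinearMap.coe_coe, pairedS_eq_zero_iff] at hf ⊢
  filter_upwards [hf, ha, h] with x hfx hax hx
  refine (mul_eq_zero.1 ?_).resolve_left hax
  linear_combination ta x * hfx + Pminus f x * hx

/-- If `{a,b}` and `{ã,b̃}` are nondegenerate and the paired kernels intersect
nontrivially, they coincide. -/
theorem statement15 (a b ta tb : Linf)
    (h1 : Nondegenerate a b) (h2 : Nondegenerate ta tb)
    (hx : ∃ f : L2, f ≠ 0 ∧ pairedS a b f = 0 ∧ pairedS ta tb f = 0) :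
    LinearMap.ker (pairedS a b : L2 →ₗ[ℂ] L2) = LinearMap.ker (pairedS ta tb : L2 →ₗ[ℂ] L2) := by
  obtain ⟨f, hf0, hf, htf⟩ := hx
  have hp : ∀ᵐ x ∂μT, Pplus f x ≠ 0 :=
    ae_ne_zero_of_mem_hardy (Pplus_mem_hardy f) (Pplus_ne_zero_of_pairedS_eq_zero h1.2.1 hf0 hf)
  have hcross : ∀ᵐ x ∂μT, a x * tb x = ta x * b x := by
    filter_upwards [(pairedS_eq_zero_iff a b f).1 hf, (pairedS_eq_zero_iff ta tb f).1 htf, hp]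
      with x hx htx hpx
    refine sub_eq_zero.1 ((mul_eq_zero.1 ?_).resolve_right hpx)
    linear_combination tb x * hx - b x * htx
  exact le_antisymm (ker_pairedS_le_of_mul_eq h1.1 hcross)
    (ker_pairedS_le_of_mul_eq h2.1 (hcross.mono fun x hx => hx.symm))

end
end
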